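/- Define ψ₁ to be reachable from ψ₂ (with respect to a monoid M of norm-nonincreasing linear maps on H) if there is a sequence of maps T_i ∈ M with ‖T_i ψ₂ − ψ₁‖ → 0. If all maps in M are unitary, reachability is symmetric: ψ₁ reachable from ψ₂ implies ψ₂ reachable from ψ₁. -/
import Mathlib

open Filter

lemma pow_norm_preserve {H : Type*} [NormedAddCommGroup H] [InnerProductSpace ℂ H]
    (T : H →ₗ[ℂ] H) (hT : ∀ x, ‖T x‖ = ‖x‖) : ∀ n : ℕ, ∀ x : H, ‖(T ^ n) x‖ = ‖x‖ := by
  intro n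
  induction n with
  | zero => intro x; simp
  | succ n ih =>
    intro x
    rw [pow_succ, Module.End.mul_apply, ih, hT]

lemma almost_periodic {H : Type*} [NormedAddCommGroup H] [InnerProductSpace ℂ H]
    [FiniteDimensional ℂ H] (T : H →ₗ[ℂ] H) (hT : ∀ x, ‖T x‖ = ‖x‖) (ψ : H) (δ : ℝ)
    (hδ : 0 < δ) : ∃ m : ℕ, 1 ≤ m ∧ ‖(T ^ m) ψ - ψ‖ < δ := by
  set u : ℕ → H := fun n => (T ^ n) ψ with hu
  have hmem : ∀ n, u n ∈ Metric.closedBall (0 : H) ‖ψ‖ := by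
    intro n
    simp [u, Metric.mem_closedBall, dist_eq_norm, pow_norm_preserve T hT n ψ]
  obtain ⟨b, _, φ, hφ, htend⟩ :=
    (isCompact_closedBall (0 : H) ‖ψ‖).tendsto_subseq hmem
  have hcauchy : CauchySeq (u ∘ φ) := htend.cauchySeq
  rw [Metric.cauchySeq_iff] at hcauchy
  obtain ⟨N, hN⟩ := hcauchy δ hδ
  have hlt : φ N < φ (N + 1) := hφ (Nat.lt_succ_self N)
  refine ⟨φ (N + 1) - φ N, Nat.one_le_iff_ne_zero.2 (by omega), ?_⟩
  have key : ‖(T ^ φ N) ((T ^ (φ (N + 1) - φ N)) ψ - ψ)‖ < δ := by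
    have : (T ^ φ N) ((T ^ (φ (N + 1) - φ N)) ψ) = (T ^ φ (N + 1)) ψ := by
      rw [← Module.End.mul_apply, ← pow_add, Nat.add_sub_cancel' hlt.le]
    rw [map_sub, this]
    have := hN (N + 1) (Nat.le_succ N) N le_rfl
    simpa [u, dist_eq_norm] using this
  rwa [pow_norm_preserve T hT] at key

theorem reachability_symmetric {H : Type*} [NormedAddCommGroup H] [InnerProductSpace ℂ H]
    [FiniteDimensional ℂ H] (M : Submonoid (H →ₗ[ℂ] H))
    (hnorm : ∀ T ∈ M, ∀ x : H, ‖T x‖ = ‖x‖)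
    (ψ₁ ψ₂ : H)
    (hreach : ∃ T : ℕ → (H →ₗ[ℂ] H), (∀ i, T i ∈ M) ∧
      Filter.Tendsto (fun i => ‖T i ψ₂ - ψ₁‖) Filter.atTop (nhds 0)) :
    ∃ T : ℕ → (H →ₗ[ℂ] H), (∀ i, T i ∈ M) ∧
      Filter.Tendsto (fun i => ‖T i ψ₁ - ψ₂‖) Filter.atTop (nhds 0) := by
  obtain ⟨T, hTM, hT⟩ := hreach
  -- for each i, pick m i ≥ 1 with ‖(T i)^(m i) ψ₂ - ψ₂‖ < 1/(i+1)
  have hchoice : ∀ i : ℕ, ∃ m : ℕ, 1 ≤ m ∧ ‖((T i) ^ m) ψ₂ - ψ₂‖ < 1 / (i + 1 : ℝ) := by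
    intro i
    exact almost_periodic (T i) (hnorm (T i) (hTM i)) ψ₂ (1 / (i + 1 : ℝ))
      (by positivity)
  choose m hm1 hm2 using hchoice
  refine ⟨fun i => (T i) ^ (m i - 1), fun i => pow_mem (hTM i) _, ?_⟩
  have hbound : ∀ i, ‖((T i) ^ (m i - 1)) ψ₁ - ψ₂‖ ≤ ‖T i ψ₂ - ψ₁‖ + 1 / (i + 1 : ℝ) := by
    intro i
    have h1 : ((T i) ^ (m i - 1)) (T i ψ₂) = ((T i) ^ (m i)) ψ₂ := by
      rw [← Module.End.mul_apply, ← pow_succ, Nat.sub_add_cancel (hm1 i)]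
    calc ‖((T i) ^ (m i - 1)) ψ₁ - ψ₂‖
        ≤ ‖((T i) ^ (m i - 1)) ψ₁ - ((T i) ^ (m i - 1)) (T i ψ₂)‖
          + ‖((T i) ^ (m i - 1)) (T i ψ₂) - ψ₂‖ := norm_sub_le_norm_sub_add_norm_sub _ _ _
      _ = ‖ψ₁ - T i ψ₂‖ + ‖((T i) ^ (m i)) ψ₂ - ψ₂‖ := by
          rw [← map_sub, pow_norm_preserve (T i) (hnorm (T i) (hTM i)), h1]
      _ ≤ ‖T i ψ₂ - ψ₁‖ + 1 / (i + 1 : ℝ) := by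
          rw [norm_sub_rev]
          exact add_le_add le_rfl (hm2 i).le
  have hlim : Tendsto (fun i => ‖T i ψ₂ - ψ₁‖ + 1 / (i + 1 : ℝ)) atTop (nhds 0) := by
    have h2 : Tendsto (fun i : ℕ => 1 / (i + 1 : ℝ)) atTop (nhds 0) :=
      tendsto_one_div_add_atTop_nhds_zero_nat
    simpa using hT.add h2
  exact squeeze_zero (fun i => norm_nonneg _) hbound hlim
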